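/- In the two-correlated-instrument model G₂ = γ₁₂·G₁ + ε₂ (with Cov(G₁,ε₂)=0, Var(G₁)>0, Var(ε₂)>0), X = β_{Y→X}Y + γ_{X,1}G₁ + γ_{X,2}G₂ + ε_X, Y = β_{X→Y}X + γ_{Y,1}G₁ + ε_Y, with β_{X→Y}β_{Y→X} ≠ 1, Cov(G₁,ε_X)=Cov(G₁,ε_Y)=Cov(ε₂,ε_X)=Cov(ε₂,ε_Y)=0: letting ω₂ = Cov(G₂,Y)/Cov(G₂,X) (assumed well-defined), the pseudo-residual satisfies Cov(Y−ω₂X, G₁)/Var(G₁) = γ_{Y,1}γ_{X,2}·M / (γ₁₂·Γ_{X,1} + γ_{X,2}·M), where M = Var(ε₂)/Var(G₁) and Γ_{X,1} = γ_{X,1} + γ₁₂γ_{X,2} + β_{Y→X}γ_{Y,1}. In particular, it is nonzero whenever γ_{Y,1} ≠ 0, γ_{X,2} ≠ 0, and the denominator is nonzero. -/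

import Mathlib

open MeasureTheory
open scoped ENNReal

noncomputable def Cov {Ω : Type*} [MeasurableSpace Ω] (μ : Measure Ω) (f g : Ω → ℝ) : ℝ :=
  ∫ ω, f ω * g ω ∂μ - (∫ ω, f ω ∂μ) * (∫ ω, g ω ∂μ)

noncomputable def Var {Ω : Type*} [MeasurableSpace Ω] (μ : Measure Ω) (f : Ω → ℝ) : ℝ :=
  Cov μ f f

noncomputable def Corr {Ω : Type*} [MeasurableSpace Ω] (μ : Measure Ω) (f g : Ω → ℝ) : ℝ :=
  Cov μ f g / Real.sqrt (Var μ f * Var μ g)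

lemma int_mul' {Ω : Type*} [MeasurableSpace Ω] {μ : Measure Ω} {f g : Ω → ℝ}
    (hf : MemLp f 2 μ) (hg : MemLp g 2 μ) :
    Integrable (fun ω => f ω * g ω) μ := by
  have h : MemLp (f • g) 1 μ := hg.smul hf
  exact memLp_one_iff_integrable.mp h

lemma cov_comm' {Ω : Type*} [MeasurableSpace Ω] (μ : Measure Ω) (f g : Ω → ℝ) :
    Cov μ f g = Cov μ g f := by
  unfold Cov
  rw [show (fun ω => f ω * g ω) = (fun ω => g ω * f ω) from by funext ω; ring]
  ring

lemma cov4 {Ω : Type*} [MeasurableSpace Ω] (μ : Measure Ω) [IsProbabilityMeasure μ]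
    (f g h k l : Ω → ℝ) (a b c d : ℝ)
    (hf : MemLp f 2 μ) (hg : MemLp g 2 μ) (hh : MemLp h 2 μ)
    (hk : MemLp k 2 μ) (hl : MemLp l 2 μ) :
    Cov μ f (fun ω => a * g ω + b * h ω + c * k ω + d * l ω) =
      a * Cov μ f g + b * Cov μ f h + c * Cov μ f k + d * Cov μ f l := by
  have hfg := int_mul' hf hg
  have hfh := int_mul' hf hh
  have hfk := int_mul' hf hk
  have hfl := int_mul' hf hl
  have hg1 : Integrable g μ := hg.integrable one_le_two
  have hh1 : Integrable h μ := hh.integrable one_le_two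
  have hk1 : Integrable k μ := hk.integrable one_le_two
  have hl1 : Integrable l μ := hl.integrable one_le_two
  have e1 : ∫ ω, f ω * (a * g ω + b * h ω + c * k ω + d * l ω) ∂μ =
      a * ∫ ω, f ω * g ω ∂μ + b * ∫ ω, f ω * h ω ∂μ + c * ∫ ω, f ω * k ω ∂μ +
        d * ∫ ω, f ω * l ω ∂μ := by
    have heq : ∀ ω, f ω * (a * g ω + b * h ω + c * k ω + d * l ω) =
        a * (f ω * g ω) + b * (f ω * h ω) + c * (f ω * k ω) + d * (f ω * l ω) :=
      fun ω => by ring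
    simp_rw [heq]
    have i12 : Integrable (fun ω => a * (f ω * g ω) + b * (f ω * h ω)) μ :=
      (hfg.const_mul a).add (hfh.const_mul b)
    have i123 : Integrable (fun ω => a * (f ω * g ω) + b * (f ω * h ω) + c * (f ω * k ω)) μ :=
      i12.add (hfk.const_mul c)
    rw [integral_add i123 (hfl.const_mul d), integral_add i12 (hfk.const_mul c),
      integral_add (hfg.const_mul a) (hfh.const_mul b),
      integral_const_mul, integral_const_mul, integral_const_mul, integral_const_mul]
  have e2 : ∫ ω, (a * g ω + b * h ω + c * k ω + d * l ω) ∂μ =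
      a * ∫ ω, g ω ∂μ + b * ∫ ω, h ω ∂μ + c * ∫ ω, k ω ∂μ + d * ∫ ω, l ω ∂μ := by
    have j12 : Integrable (fun ω => a * g ω + b * h ω) μ :=
      (hg1.const_mul a).add (hh1.const_mul b)
    have j123 : Integrable (fun ω => a * g ω + b * h ω + c * k ω) μ :=
      j12.add (hk1.const_mul c)
    rw [integral_add j123 (hl1.const_mul d), integral_add j12 (hk1.const_mul c),
      integral_add (hg1.const_mul a) (hh1.const_mul b),
      integral_const_mul, integral_const_mul, integral_const_mul, integral_const_mul]
  simp only [Cov]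
  rw [e1, e2]
  ring

/-- Pseudo-residual covariance in the two-correlated-instrument model. -/
theorem stmt_19 {Ω : Type*} [MeasurableSpace Ω] (μ : Measure Ω) [IsProbabilityMeasure μ]
    (G₁ G₂ ε₂ εX εY X Y : Ω → ℝ) (βXY βYX γ12 γX1 γX2 γY1 : ℝ)
    (hG₁m : MemLp G₁ 2 μ) (hε₂m : MemLp ε₂ 2 μ)
    (hεXm : MemLp εX 2 μ) (hεYm : MemLp εY 2 μ)
    (hXm : MemLp X 2 μ) (hYm : MemLp Y 2 μ)
    (hβ : βXY * βYX ≠ 1)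
    (hG₂ : ∀ ω, G₂ ω = γ12 * G₁ ω + ε₂ ω)
    (hX : ∀ ω, X ω = βYX * Y ω + γX1 * G₁ ω + γX2 * G₂ ω + εX ω)
    (hY : ∀ ω, Y ω = βXY * X ω + γY1 * G₁ ω + εY ω)
    (hVarG₁ : 0 < Var μ G₁) (hVarε₂ : 0 < Var μ ε₂)
    (h1 : Cov μ G₁ ε₂ = 0) (h2 : Cov μ G₁ εX = 0) (h3 : Cov μ G₁ εY = 0)
    (h4 : Cov μ ε₂ εX = 0) (h5 : Cov μ ε₂ εY = 0)
    (hden : γ12 * (γX1 + γ12 * γX2 + βYX * γY1) +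
        γX2 * (Var μ ε₂ / Var μ G₁) ≠ 0)
    (hG₂X : Cov μ G₂ X ≠ 0) :
    Cov μ (fun ω => Y ω - (Cov μ G₂ Y / Cov μ G₂ X) * X ω) G₁ / Var μ G₁ =
      γY1 * γX2 * (Var μ ε₂ / Var μ G₁) /
        (γ12 * (γX1 + γ12 * γX2 + βYX * γY1) + γX2 * (Var μ ε₂ / Var μ G₁)) ∧
    (γY1 ≠ 0 → γX2 ≠ 0 →
      Cov μ (fun ω => Y ω - (Cov μ G₂ Y / Cov μ G₂ X) * X ω) G₁ ≠ 0) := by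
  set V₁ := Var μ G₁ with hV₁
  set V₂ := Var μ ε₂ with hV₂
  have hVV₁ : Cov μ G₁ G₁ = V₁ := rfl
  have hVV₂ : Cov μ ε₂ ε₂ = V₂ := rfl
  have hV₁0 : V₁ ≠ 0 := ne_of_gt hVarG₁
  have hD : 1 - βXY * βYX ≠ 0 := by
    intro h; apply hβ; linarith
  have hXlin : ∀ ω, X ω = βYX * Y ω + (γX1 + γ12 * γX2) * G₁ ω + γX2 * ε₂ ω + 1 * εX ω := by
    intro ω; rw [hX ω, hG₂ ω]; ring
  have hYlin : ∀ ω, Y ω = βXY * X ω + γY1 * G₁ ω + 1 * εY ω + 0 * εY ω := by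
    intro ω; rw [hY ω]; ring
  have h1' : Cov μ ε₂ G₁ = 0 := by rw [cov_comm']; exact h1
  have hc1 : Cov μ G₁ X = βYX * Cov μ G₁ Y + (γX1 + γ12 * γX2) * V₁ := by
    calc Cov μ G₁ X
        = Cov μ G₁ (fun ω => βYX * Y ω + (γX1 + γ12 * γX2) * G₁ ω + γX2 * ε₂ ω + 1 * εX ω) := by
          congr 1; funext ω; exact hXlin ω
      _ = βYX * Cov μ G₁ Y + (γX1 + γ12 * γX2) * Cov μ G₁ G₁ + γX2 * Cov μ G₁ ε₂
            + 1 * Cov μ G₁ εX :=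
          cov4 μ G₁ Y G₁ ε₂ εX _ _ _ _ hG₁m hYm hG₁m hε₂m hεXm
      _ = βYX * Cov μ G₁ Y + (γX1 + γ12 * γX2) * V₁ := by rw [h1, h2, hVV₁]; ring
  have hc2 : Cov μ G₁ Y = βXY * Cov μ G₁ X + γY1 * V₁ := by
    calc Cov μ G₁ Y
        = Cov μ G₁ (fun ω => βXY * X ω + γY1 * G₁ ω + 1 * εY ω + 0 * εY ω) := by
          congr 1; funext ω; exact hYlin ω
      _ = βXY * Cov μ G₁ X + γY1 * Cov μ G₁ G₁ + 1 * Cov μ G₁ εY + 0 * Cov μ G₁ εY :=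
          cov4 μ G₁ X G₁ εY εY _ _ _ _ hG₁m hXm hG₁m hεYm hεYm
      _ = βXY * Cov μ G₁ X + γY1 * V₁ := by rw [h3, hVV₁]; ring
  have hd1 : Cov μ ε₂ X = βYX * Cov μ ε₂ Y + γX2 * V₂ := by
    calc Cov μ ε₂ X
        = Cov μ ε₂ (fun ω => βYX * Y ω + (γX1 + γ12 * γX2) * G₁ ω + γX2 * ε₂ ω + 1 * εX ω) := by
          congr 1; funext ω; exact hXlin ω
      _ = βYX * Cov μ ε₂ Y + (γX1 + γ12 * γX2) * Cov μ ε₂ G₁ + γX2 * Cov μ ε₂ ε₂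
            + 1 * Cov μ ε₂ εX :=
          cov4 μ ε₂ Y G₁ ε₂ εX _ _ _ _ hε₂m hYm hG₁m hε₂m hεXm
      _ = βYX * Cov μ ε₂ Y + γX2 * V₂ := by rw [h1', h4, hVV₂]; ring
  have hd2 : Cov μ ε₂ Y = βXY * Cov μ ε₂ X := by
    calc Cov μ ε₂ Y
        = Cov μ ε₂ (fun ω => βXY * X ω + γY1 * G₁ ω + 1 * εY ω + 0 * εY ω) := by
          congr 1; funext ω; exact hYlin ω
      _ = βXY * Cov μ ε₂ X + γY1 * Cov μ ε₂ G₁ + 1 * Cov μ ε₂ εY + 0 * Cov μ ε₂ εY :=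
          cov4 μ ε₂ X G₁ εY εY _ _ _ _ hε₂m hXm hG₁m hεYm hεYm
      _ = βXY * Cov μ ε₂ X := by rw [h1', h5]; ring
  set c1 := Cov μ G₁ X
  set c2 := Cov μ G₁ Y
  set d1 := Cov μ ε₂ X
  set d2 := Cov μ ε₂ Y
  set Γ := γX1 + γ12 * γX2 + βYX * γY1 with hΓ
  have hc1' : c1 * (1 - βXY * βYX) = Γ * V₁ := by
    rw [hΓ]; linear_combination hc1 + βYX * hc2
  have hc2' : c2 * (1 - βXY * βYX) = (βXY * Γ + (1 - βXY * βYX) * γY1) * V₁ := by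
    rw [hΓ]; linear_combination hc2 + βXY * hc1
  have hd1' : d1 * (1 - βXY * βYX) = γX2 * V₂ := by
    linear_combination hd1 + βYX * hd2
  have hd2' : d2 * (1 - βXY * βYX) = βXY * γX2 * V₂ := by
    linear_combination hd2 + βXY * hd1
  have hG₂X' : Cov μ G₂ X = γ12 * c1 + d1 := by
    calc Cov μ G₂ X = Cov μ X G₂ := cov_comm' μ G₂ X
      _ = Cov μ X (fun ω => γ12 * G₁ ω + 1 * ε₂ ω + 0 * ε₂ ω + 0 * ε₂ ω) := by
          congr 1; funext ω; rw [hG₂ ω]; ring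
      _ = γ12 * Cov μ X G₁ + 1 * Cov μ X ε₂ + 0 * Cov μ X ε₂ + 0 * Cov μ X ε₂ :=
          cov4 μ X G₁ ε₂ ε₂ ε₂ _ _ _ _ hXm hG₁m hε₂m hε₂m hε₂m
      _ = γ12 * c1 + d1 := by rw [cov_comm' μ X G₁, cov_comm' μ X ε₂]; ring
  have hG₂Y' : Cov μ G₂ Y = γ12 * c2 + d2 := by
    calc Cov μ G₂ Y = Cov μ Y G₂ := cov_comm' μ G₂ Y
      _ = Cov μ Y (fun ω => γ12 * G₁ ω + 1 * ε₂ ω + 0 * ε₂ ω + 0 * ε₂ ω) := by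
          congr 1; funext ω; rw [hG₂ ω]; ring
      _ = γ12 * Cov μ Y G₁ + 1 * Cov μ Y ε₂ + 0 * Cov μ Y ε₂ + 0 * Cov μ Y ε₂ :=
          cov4 μ Y G₁ ε₂ ε₂ ε₂ _ _ _ _ hYm hG₁m hε₂m hε₂m hε₂m
      _ = γ12 * c2 + d2 := by rw [cov_comm' μ Y G₁, cov_comm' μ Y ε₂]; ring
  set w := Cov μ G₂ Y / Cov μ G₂ X with hw
  have hres : Cov μ (fun ω => Y ω - w * X ω) G₁ = c2 - w * c1 := by
    calc Cov μ (fun ω => Y ω - w * X ω) G₁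
        = Cov μ G₁ (fun ω => Y ω - w * X ω) := cov_comm' μ _ G₁
      _ = Cov μ G₁ (fun ω => 1 * Y ω + (-w) * X ω + 0 * X ω + 0 * X ω) := by
          congr 1; funext ω; ring
      _ = 1 * Cov μ G₁ Y + (-w) * Cov μ G₁ X + 0 * Cov μ G₁ X + 0 * Cov μ G₁ X :=
          cov4 μ G₁ Y X X X _ _ _ _ hG₁m hYm hXm hXm hXm
      _ = c2 - w * c1 := by ring
  have hK : γ12 * Γ * V₁ + γX2 * V₂ ≠ 0 := by
    intro h
    apply hden
    field_simp
    linear_combination h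
  have hG₂Xval : Cov μ G₂ X * (1 - βXY * βYX) = γ12 * Γ * V₁ + γX2 * V₂ := by
    rw [hG₂X']; linear_combination γ12 * hc1' + hd1'
  -- solved values
  have hc1v : c1 = Γ * V₁ / (1 - βXY * βYX) := by
    rw [eq_div_iff hD]; exact hc1'
  have hc2v : c2 = (βXY * Γ + (1 - βXY * βYX) * γY1) * V₁ / (1 - βXY * βYX) := by
    rw [eq_div_iff hD]; exact hc2'
  have hSv : Cov μ G₂ X = (γ12 * Γ * V₁ + γX2 * V₂) / (1 - βXY * βYX) := by
    rw [eq_div_iff hD]; exact hG₂Xval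
  have hTv : Cov μ G₂ Y = (γ12 * (βXY * Γ + (1 - βXY * βYX) * γY1) * V₁ + βXY * γX2 * V₂) /
      (1 - βXY * βYX) := by
    rw [hG₂Y', eq_div_iff hD]; linear_combination γ12 * hc2' + hd2'
  have hmain' : Cov μ (fun ω => Y ω - w * X ω) G₁ =
      γY1 * γX2 * V₂ * V₁ / (γ12 * Γ * V₁ + γX2 * V₂) := by
    rw [hres, hw, hSv, hTv, hc1v, hc2v]
    generalize hS : γ12 * Γ * V₁ + γX2 * V₂ = S at hK ⊢
    field_simp
    rw [← hS]
    ring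
  constructor
  · rw [hmain', div_div, div_eq_div_iff (mul_ne_zero hK hV₁0) hden]
    field_simp
  · intro hγY1 hγX2
    rw [hmain']
    exact div_ne_zero
      (mul_ne_zero (mul_ne_zero (mul_ne_zero hγY1 hγX2) (ne_of_gt hVarε₂)) hV₁0) hK
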